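/- arXiv:math/0606508 — 2 statements merged into one kernel-verified Lean document; each statement's English description precedes it below -/
import Mathlib

section
/- Let B be a nondegenerate symmetric bilinear form on a finite-dimensional real vector space V and let e ∈ V be a nonzero vector with B(e, e) = 0. For v ∈ V with B(v, e) = 0, define M_v : V → V by M_v(x) = B(x, e)·v − B(x, v)·e. Then exp(M_v) is the identity map of V if and only if v is a real scalar multiple of e. In particular, the group homomorphism v ↦ exp(M_v) on {v : B(v, e) = 0} has kernel exactly ℝ·e. -/
/-- For a nondegenerate symmetric bilinear form `B`, a nonzero `B`-null vector `e`, and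
`v` with `B v e = 0`, the automorphism `exp M_v = 1 + M_v + M_v²/2` (where
`M_v x = B x e • v - B x v • e`) is the identity iff `v` is a scalar multiple of `e`. -/
theorem exp_translation_trivial_iff
    {V : Type*} [AddCommGroup V] [Module ℝ V] [FiniteDimensional ℝ V]
    (B : V →ₗ[ℝ] V →ₗ[ℝ] ℝ) (hsymm : ∀ x y, B x y = B y x)
    (hnd : ∀ x : V, (∀ y : V, B x y = 0) → x = 0)
    (e : V) (he0 : e ≠ 0) (he : B e e = 0)
    (v : V) (hv : B v e = 0)
    (M : V →ₗ[ℝ] V) (hM : ∀ x, M x = B x e • v - B x v • e) :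
    (1 + M + (1 / 2 : ℝ) • (M * M) = 1) ↔ ∃ c : ℝ, v = c • e := by
  have hev : B e v = 0 := by rw [hsymm]; exact hv
  constructor
  · intro h
    -- find x₀ with B x₀ e ≠ 0
    obtain ⟨x₀, hx0⟩ : ∃ x₀, B x₀ e ≠ 0 := by
      by_contra hall
      push_neg at hall
      exact he0 (hnd e (fun y => by rw [hsymm]; exact hall y))
    -- pointwise equation
    have key : M x₀ + (1 / 2 : ℝ) • M (M x₀) = 0 := by
      have h1 := LinearMap.congr_fun h x₀
      simp only [LinearMap.add_apply, LinearMap.smul_apply, Module.End.mul_apply,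
        Module.End.one_apply] at h1
      have h2 : x₀ + (M x₀ + (1 / 2 : ℝ) • M (M x₀)) = x₀ := by
        rw [← add_assoc]; exact h1
      exact add_eq_left.mp h2
    have hMM : M (M x₀) = -((B x₀ e * B v v) • e) := by
      rw [hM x₀, hM]
      simp [map_sub, map_smul, hv, he, hev, smul_eq_mul, smul_smul]
    rw [hMM, hM x₀] at key
    have hveq : B x₀ e • v = (B x₀ v + (1 / 2 : ℝ) * (B x₀ e * B v v)) • e := by
      rw [add_smul, ← smul_smul]
      apply eq_of_sub_eq_zero
      rw [← key]
      module
    refine ⟨(B x₀ e)⁻¹ * (B x₀ v + (1 / 2 : ℝ) * (B x₀ e * B v v)), ?_⟩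
    rw [mul_smul, ← hveq, smul_smul, inv_mul_cancel₀ hx0, one_smul]
  · rintro ⟨c, rfl⟩
    have hM0 : M = 0 := by
      ext x
      rw [hM]
      simp [map_smul, smul_smul, mul_comm]
    rw [hM0]
    simp
end

section
/- Let B be a nondegenerate symmetric bilinear form on ℝ^{n+2} of signature (n+1, 1) (i.e., equivalent to the form x₁y₁ + ⋯ + x_{n+1}y_{n+1} − x_{n+2}y_{n+2}), and let v, w ∈ ℝ^{n+2} be linearly independent vectors with B(v, v) = B(w, w) = 0. Then the restriction of B to the B-orthogonal complement V_∞ = {x ∈ ℝ^{n+2} : B(x, v) = 0 and B(x, w) = 0} is a positive definite bilinear form, and V_∞ has dimension n. -/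
/-!
After a change of coordinates `B` is the Minkowski form, so it is positive definite on the
hyperplane `ker t` of vectors with vanishing time coordinate `t`. If a nonzero `x` orthogonal to
the null vectors `v, w` had `B x x ≤ 0`, then `t x ≠ 0`, and `u = t x • v - t v • x` lies in `ker t`
with `B u u = (t v)² B x x ≤ 0`; hence `u = 0` and `v ∈ ℝ x`. Likewise `w ∈ ℝ x`, contradicting
the independence of `v, w`. The dimension is the usual count for the orthogonal complement of a
plane under a nondegenerate form.
-/

section BilinForm

variable {V : Type*} [AddCommGroup V] [Module ℝ V] {B : LinearMap.BilinForm ℝ V}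
  {t : V →ₗ[ℝ] ℝ}

lemma smul_eq_smul_of_null_of_nonpos (hsymm : ∀ x y, B x y = B y x)
    (ht : ∀ u, t u = 0 → u ≠ 0 → 0 < B u u) {x v : V}
    (hxx : B x x ≤ 0) (hv : B v v = 0) (hxv : B x v = 0) : t x • v = t v • x := by
  set u := t x • v - t v • x
  have htu : t u = 0 := by simp only [u, map_sub, map_smul, smul_eq_mul]; ring
  have hBu : B u u = t v ^ 2 * B x x := by
    simp only [u, map_sub, map_smul, LinearMap.sub_apply, LinearMap.smul_apply, smul_eq_mul,
      hv, hxv, hsymm v x]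
    ring
  by_contra hne
  have := ht u htu (sub_ne_zero.mpr hne)
  nlinarith [sq_nonneg (t v)]

lemma pos_of_orthogonal_null_pair (hsymm : ∀ x y, B x y = B y x)
    (ht : ∀ u, t u = 0 → u ≠ 0 → 0 < B u u) {v w x : V} (hind : LinearIndependent ℝ ![v, w])
    (hv : B v v = 0) (hw : B w w = 0) (hxv : B x v = 0) (hxw : B x w = 0) (hx : x ≠ 0) :
    0 < B x x := by
  by_contra! hxx
  have htx : t x ≠ 0 := fun h => (ht x h hx).not_ge hxx
  have hvx := smul_eq_smul_of_null_of_nonpos hsymm ht hxx hv hxv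
  have hwx := smul_eq_smul_of_null_of_nonpos hsymm ht hxx hw hxw
  have hcomb : t w • v + (-t v) • w = 0 := by
    have : t x • (t w • v + (-t v) • w) = 0 := calc
      _ = t w • (t x • v) - t v • (t x • w) := by
        rw [smul_add, smul_comm, smul_comm (t x), neg_smul, sub_eq_add_neg]
      _ = 0 := by rw [hvx, hwx, smul_smul, smul_smul, mul_comm, sub_self]
    exact (smul_eq_zero.mp this).resolve_left htx
  have htv : t v = 0 := neg_eq_zero.mp (LinearIndependent.pair_iff.mp hind _ _ hcomb).2
  have hv0 : v = 0 := by simpa [htv, htx] using hvx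
  exact hind.ne_zero 0 (by simpa using hv0)

lemma mem_orthogonal_span_pair_iff (hsymm : ∀ x y, B x y = B y x) {v w x : V} :
    x ∈ B.orthogonal (Submodule.span ℝ {v, w}) ↔ B x v = 0 ∧ B x w = 0 := by
  rw [LinearMap.BilinForm.mem_orthogonal_iff, hsymm x v, hsymm x w]
  change Submodule.span ℝ {v, w} ≤ LinearMap.ker (B.flip x) ↔ _
  rw [Submodule.span_le, Set.insert_subset_iff, Set.singleton_subset_iff]
  rfl

lemma finrank_orthogonal_span_pair [FiniteDimensional ℝ V] (hsymm : ∀ x y, B x y = B y x)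
    (hnd : ∀ x, (∀ y, B x y = 0) → x = 0) {v w : V} (hind : LinearIndependent ℝ ![v, w]) :
    Module.finrank ℝ (B.orthogonal (Submodule.span ℝ {v, w})) = Module.finrank ℝ V - 2 := by
  have hB : B.Nondegenerate :=
    (LinearMap.IsRefl.nondegenerate_iff_separatingLeft fun x y h => by rwa [hsymm]).mpr hnd
  rw [LinearMap.BilinForm.finrank_orthogonal hB, ← Matrix.range_cons_cons_empty,
    finrank_span_eq_card hind, Fintype.card_fin]

end BilinForm

lemma minkowski_pos_of_last_eq_zero {n : ℕ} {y : Fin (n + 2) → ℝ} (hy : y ≠ 0)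
    (hlast : y (Fin.last (n + 1)) = 0) :
    0 < (∑ i : Fin (n + 1), y (Fin.castSucc i) * y (Fin.castSucc i))
      - y (Fin.last (n + 1)) * y (Fin.last (n + 1)) := by
  obtain ⟨i, hi⟩ : ∃ i : Fin (n + 1), y (Fin.castSucc i) ≠ 0 := by
    by_contra! h
    exact hy (funext fun j => Fin.lastCases hlast h j)
  rw [hlast, mul_zero, sub_zero]
  exact Finset.sum_pos' (fun j _ => mul_self_nonneg _) ⟨i, Finset.mem_univ _, mul_self_pos.mpr hi⟩

lemma exists_posDef_on_ker_of_signature {n : ℕ}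
    {B : (Fin (n + 2) → ℝ) →ₗ[ℝ] (Fin (n + 2) → ℝ) →ₗ[ℝ] ℝ}
    (hsig : ∃ S : (Fin (n + 2) → ℝ) →ₗ[ℝ] (Fin (n + 2) → ℝ), Function.Bijective S ∧
      ∀ x y : Fin (n + 2) → ℝ,
        B (S x) (S y) = (∑ i : Fin (n + 1), x (Fin.castSucc i) * y (Fin.castSucc i))
          - x (Fin.last (n + 1)) * y (Fin.last (n + 1))) :
    ∃ t : (Fin (n + 2) → ℝ) →ₗ[ℝ] ℝ, ∀ u, t u = 0 → u ≠ 0 → 0 < B u u := by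
  obtain ⟨S, hS, hB⟩ := hsig
  let e := LinearEquiv.ofBijective S hS
  refine ⟨LinearMap.proj (Fin.last (n + 1)) ∘ₗ e.symm.toLinearMap, fun u hu hu0 => ?_⟩
  have hSu : S (e.symm u) = u := e.apply_symm_apply u
  rw [← hSu, hB]
  exact minkowski_pos_of_last_eq_zero (by simpa using hu0) hu

/-- For a symmetric bilinear form `B` of signature `(n+1, 1)` on `ℝ^{n+2}` and linearly
independent `B`-null vectors `v, w`, the restriction of `B` to the `B`-orthogonal
complement of `v` and `w` is positive definite, and that complement has dimension `n`. -/
theorem null_complement_positive_definite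
    (n : ℕ)
    (B : (Fin (n + 2) → ℝ) →ₗ[ℝ] (Fin (n + 2) → ℝ) →ₗ[ℝ] ℝ)
    (hsymm : ∀ x y, B x y = B y x)
    (hnd : ∀ x : Fin (n + 2) → ℝ, (∀ y : Fin (n + 2) → ℝ, B x y = 0) → x = 0)
    (hsig : ∃ S : (Fin (n + 2) → ℝ) →ₗ[ℝ] (Fin (n + 2) → ℝ), Function.Bijective S ∧
      ∀ x y : Fin (n + 2) → ℝ,
        B (S x) (S y) = (∑ i : Fin (n + 1), x (Fin.castSucc i) * y (Fin.castSucc i))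
          - x (Fin.last (n + 1)) * y (Fin.last (n + 1)))
    (v w : Fin (n + 2) → ℝ) (hind : LinearIndependent ℝ ![v, w])
    (hv : B v v = 0) (hw : B w w = 0)
    (W : Submodule ℝ (Fin (n + 2) → ℝ))
    (hW : ∀ x : Fin (n + 2) → ℝ, x ∈ W ↔ (B x v = 0 ∧ B x w = 0)) :
    (∀ x ∈ W, x ≠ 0 → 0 < B x x) ∧ Module.finrank ℝ W = n := by
  obtain ⟨t, ht⟩ := exists_posDef_on_ker_of_signature hsig
  have hW_eq : W = LinearMap.BilinForm.orthogonal B (Submodule.span ℝ {v, w}) := by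
    ext x
    rw [hW, mem_orthogonal_span_pair_iff hsymm]
  refine ⟨fun x hx hx0 => ?_, ?_⟩
  · obtain ⟨hxv, hxw⟩ := (hW x).mp hx
    exact pos_of_orthogonal_null_pair hsymm ht hind hv hw hxv hxw hx0
  · rw [hW_eq, finrank_orthogonal_span_pair hsymm hnd hind, Module.finrank_fin_fun]
    rfl
end
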